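/- Let R be an integral domain, N a natural number, and ξ ∈ R a primitive N-th root of unity. Let X and Y be N-complexes of R-modules and define (X ⊗_ξ Y)^n = ⊕_{i+j=n} X^i ⊗ Y^j with differential acting on the summand X^i ⊗ Y^j by d(x ⊗ y) = d_X(x) ⊗ y + ξ^i · x ⊗ d_Y(y). Then d^N = 0 on X ⊗_ξ Y, i.e. X ⊗_ξ Y is again an N-complex. -/

import Mathlib

open scoped TensorProduct DirectSum

universe u v

variable {R : Type u} [CommRing R]

def lcast {M : ℤ → Type v} [∀ i, AddCommGroup (M i)] [∀ i, Module R (M i)]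
    {a b : ℤ} (h : a = b) : M a →ₗ[R] M b := by subst h; exact LinearMap.id

def dIter (M : ℤ → Type v) [∀ i, AddCommGroup (M i)] [∀ i, Module R (M i)]
    (d : ∀ i : ℤ, M i →ₗ[R] M (i + 1)) : ∀ (k : ℕ) (i : ℤ), M i →ₗ[R] M (i + k)
  | 0, i => lcast (by simp)
  | k + 1, i =>
    (lcast (show i + 1 + (k : ℕ) = i + ((k : ℕ) + 1 : ℕ) by push_cast; ring)).comp
      ((dIter M d k (i + 1)).comp (d i))

structure NCx (R : Type u) [CommRing R] (N : ℕ) where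
  M : ℤ → Type v
  [acg : ∀ i, AddCommGroup (M i)]
  [mod : ∀ i, Module R (M i)]
  d : ∀ i : ℤ, M i →ₗ[R] M (i + 1)
  dN : ∀ i : ℤ, dIter M d N i = 0

attribute [instance] NCx.acg NCx.mod

/-- The index set `{(i,j) : i + j = n}` of the degree-`n` part of a tensor product of
graded modules. -/
def TIdx (n : ℤ) : Type := {p : ℤ × ℤ // p.1 + p.2 = n}

instance (n : ℤ) : DecidableEq (TIdx n) := by unfold TIdx; infer_instance

/-- The degree-`n` part `⊕_{i+j=n} X^i ⊗ Y^j` of the tensor product of two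
graded modules. -/
def TObj {N : ℕ} (X Y : NCx.{u, v} R N) (n : ℤ) : Type v :=
  ⨁ p : TIdx n, (X.M p.1.1 ⊗[R] Y.M p.1.2)

noncomputable instance {N : ℕ} (X Y : NCx.{u, v} R N) (n : ℤ) :
    AddCommGroup (TObj X Y n) := by unfold TObj; infer_instance

noncomputable instance {N : ℕ} (X Y : NCx.{u, v} R N) (n : ℤ) :
    Module R (TObj X Y n) := by unfold TObj; infer_instance

/-- The twisted differential of the tensor product of two `N`-complexes: on the
summand `X^i ⊗ Y^j` it is `d(x ⊗ y) = d_X x ⊗ y + ξ^i • (x ⊗ d_Y y)`. -/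
noncomputable def TD {N : ℕ} (ξ : Rˣ) (X Y : NCx.{u, v} R N) (n : ℤ) :
    TObj X Y n →ₗ[R] TObj X Y (n + 1) :=
  DirectSum.toModule R (TIdx n) (TObj X Y (n + 1)) fun p =>
    ((DirectSum.lof R (TIdx (n + 1)) (fun q => X.M q.1.1 ⊗[R] Y.M q.1.2)
        ⟨(p.1.1 + 1, p.1.2), by obtain ⟨⟨i, j⟩, hp⟩ := p; dsimp at hp ⊢; omega⟩).comp
      (TensorProduct.map (X.d p.1.1) LinearMap.id))
    + (((ξ ^ p.1.1 : Rˣ) : R) •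
      ((DirectSum.lof R (TIdx (n + 1)) (fun q => X.M q.1.1 ⊗[R] Y.M q.1.2)
        ⟨(p.1.1, p.1.2 + 1), by obtain ⟨⟨i, j⟩, hp⟩ := p; dsimp at hp ⊢; omega⟩).comp
      (TensorProduct.map LinearMap.id (Y.d p.1.2))))

/-!
A degree-one family `d` on `M : ℤ → Type*` is a single endomorphism `totalEnd d` of `⨁ i, M i`,
and `d^N = 0` in every degree iff `totalEnd d ^ N = 0`. Pulled back along
`(⨁ i, X^i) ⊗ (⨁ j, Y^j) → ⨁ n, (X ⊗_ξ Y)^n`, the twisted differential becomes `a + b` with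
`a = d_X ⊗ 1` and `b = t ⊗ d_Y`, where `t` is multiplication by `ξ^i` on `X^i`. Then `b a = ξ a b`,
so the q-binomial theorem expands `(a + b)^N` as `∑ [N choose k]_ξ a^(N-k) b^k`. The extreme terms
vanish since `a^N = b^N = 0`, and the others since `[N choose k]_ξ [k]_ξ! [N-k]_ξ! = [N]_ξ! = 0`
while the two q-factorials on the left are nonzero in a domain.
-/

open Finset

section QBinomial

variable {A : Type*} [CommSemiring A] (q : A)

def qFactorial : ℕ → A
  | 0 => 1
  | n + 1 => qFactorial n * ∑ s ∈ range (n + 1), q ^ s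

def qChoose : ℕ → ℕ → A
  | _, 0 => 1
  | 0, _ + 1 => 0
  | n + 1, k + 1 => qChoose n k + q ^ (k + 1) * qChoose n (k + 1)

@[simp] lemma qFactorial_zero : qFactorial q 0 = 1 := rfl

@[simp] lemma qChoose_zero_right (n : ℕ) : qChoose q n 0 = 1 := by cases n <;> rfl

lemma qChoose_succ_succ (n k : ℕ) :
    qChoose q (n + 1) (k + 1) = qChoose q n k + q ^ (k + 1) * qChoose q n (k + 1) := rfl

lemma qChoose_eq_zero_of_lt : ∀ {n k : ℕ}, n < k → qChoose q n k = 0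
  | 0, _ + 1, _ => rfl
  | n + 1, k + 1, h => by
    rw [qChoose_succ_succ, qChoose_eq_zero_of_lt (by omega), qChoose_eq_zero_of_lt (by omega),
      mul_zero, add_zero]

@[simp] lemma qChoose_self : ∀ n : ℕ, qChoose q n n = 1
  | 0 => rfl
  | n + 1 => by rw [qChoose_succ_succ, qChoose_self n, qChoose_eq_zero_of_lt q (by omega),
      mul_zero, add_zero]

lemma geom_sum_range_add (a b : ℕ) :
    ∑ s ∈ range (a + b), q ^ s = ∑ s ∈ range a, q ^ s + q ^ a * ∑ s ∈ range b, q ^ s := by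
  simp only [sum_range_add, pow_add, mul_sum]

lemma qChoose_add_mul_qFactorial_mul_qFactorial (i j : ℕ) :
    qChoose q (i + j) j * qFactorial q i * qFactorial q j = qFactorial q (i + j) := by
  induction j generalizing i with
  | zero => simp
  | succ j ihj =>
    induction i with
    | zero => simp
    | succ i ihi =>
      have hsum := geom_sum_range_add q (j + 1) (i + 1)
      rw [show j + 1 + (i + 1) = i + 1 + j + 1 by omega] at hsum
      calc qChoose q (i + 1 + (j + 1)) (j + 1) * qFactorial q (i + 1) * qFactorial q (j + 1)
          = qChoose q (i + 1 + j) j * qFactorial q (i + 1) * qFactorial q j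
              * ∑ s ∈ range (j + 1), q ^ s
            + q ^ (j + 1) * (qChoose q (i + (j + 1)) (j + 1) * qFactorial q i
              * qFactorial q (j + 1)) * ∑ s ∈ range (i + 1), q ^ s := by
            rw [show i + 1 + (j + 1) = i + 1 + j + 1 by omega, qChoose_succ_succ,
              show i + 1 + j = i + (j + 1) by omega]
            simp only [qFactorial]
            ring
        _ = qFactorial q (i + 1 + (j + 1)) := by
            rw [ihj, ihi, show i + (j + 1) = i + 1 + j by omega,
              show i + 1 + (j + 1) = i + 1 + j + 1 from rfl, qFactorial, hsum]
            ring

end QBinomial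

section RootOfUnity

variable {A : Type*} [CommRing A] {q : A} {N : ℕ}

lemma IsPrimitiveRoot.geom_sum_ne_zero (hq : IsPrimitiveRoot q N) {t : ℕ} (h0 : t ≠ 0)
    (ht : t < N) : ∑ s ∈ range t, q ^ s ≠ 0 := by
  intro h
  have := geom_sum_mul q t
  rw [h, zero_mul, eq_comm, sub_eq_zero] at this
  exact hq.pow_ne_one_of_pos_of_lt h0 ht this

variable [IsDomain A]

lemma IsPrimitiveRoot.qFactorial_ne_zero (hq : IsPrimitiveRoot q N) :
    ∀ {t : ℕ}, t < N → qFactorial q t ≠ 0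
  | 0, _ => one_ne_zero
  | t + 1, ht =>
    mul_ne_zero (hq.qFactorial_ne_zero (by omega)) (hq.geom_sum_ne_zero t.succ_ne_zero ht)

lemma IsPrimitiveRoot.qFactorial_self (hq : IsPrimitiveRoot q N) (hN : 1 < N) :
    qFactorial q N = 0 := by
  obtain ⟨t, rfl⟩ : ∃ t, N = t + 1 := ⟨N - 1, by omega⟩
  rw [qFactorial, hq.geom_sum_eq_zero hN, mul_zero]

lemma IsPrimitiveRoot.qChoose_eq_zero (hq : IsPrimitiveRoot q N) {k : ℕ} (h0 : 0 < k)
    (hk : k < N) : qChoose q N k = 0 := by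
  have h := qChoose_add_mul_qFactorial_mul_qFactorial q (N - k) k
  rw [Nat.sub_add_cancel hk.le, hq.qFactorial_self (by omega)] at h
  simpa [hq.qFactorial_ne_zero (by omega : N - k < N), hq.qFactorial_ne_zero hk] using h

end RootOfUnity

section QBinomialTheorem

variable {A S : Type*} [CommSemiring A] [Semiring S] [Algebra A S] {q : A} {a b : S}

lemma pow_mul_eq_smul_mul_pow (h : b * a = q • (a * b)) (m : ℕ) :
    b ^ m * a = q ^ m • (a * b ^ m) := by
  induction m with
  | zero => simp
  | succ m ih =>
    rw [pow_succ, mul_assoc, h, mul_smul_comm, ← mul_assoc, ih, smul_mul_assoc, smul_smul,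
      mul_assoc, ← pow_succ, pow_succ' q]

theorem add_pow_of_mul_eq_smul_mul (h : b * a = q • (a * b)) (n : ℕ) :
    (a + b) ^ n = ∑ p ∈ antidiagonal n, qChoose q n p.2 • (a ^ p.1 * b ^ p.2) := by
  induction n with
  | zero => simp
  | succ n ih =>
    set g : ℕ × ℕ → S := fun p => (q ^ p.2 * qChoose q n p.2) • (a ^ p.1 * b ^ p.2)
    have hshift : ∑ p ∈ antidiagonal n, g (p.1 + 1, p.2) =
        g (n + 1, 0) + ∑ p ∈ antidiagonal n, g (p.1, p.2 + 1) := by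
      rw [← Nat.sum_antidiagonal_succ', Nat.sum_antidiagonal_succ,
        show g (0, n + 1) = 0 by simp [g, qChoose_eq_zero_of_lt q (Nat.lt_succ_self n)],
        zero_add]
    calc (a + b) ^ (n + 1)
        = ∑ p ∈ antidiagonal n, g (p.1 + 1, p.2)
          + ∑ p ∈ antidiagonal n, qChoose q n p.2 • (a ^ p.1 * b ^ (p.2 + 1)) := by
          rw [pow_succ, ih, sum_mul, ← sum_add_distrib]
          refine sum_congr rfl fun p _ => ?_
          rw [smul_mul_assoc, mul_add, smul_add, mul_assoc, pow_mul_eq_smul_mul_pow h,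
            mul_smul_comm, smul_smul, ← mul_assoc, ← pow_succ, mul_assoc (a ^ p.1), ← pow_succ,
            mul_comm (qChoose q n p.2)]
      _ = ∑ p ∈ antidiagonal (n + 1), qChoose q (n + 1) p.2 • (a ^ p.1 * b ^ p.2) := by
          rw [hshift, Nat.sum_antidiagonal_succ', add_assoc, ← sum_add_distrib]
          congr 1
          · simp [g]
          · refine sum_congr rfl fun p _ => ?_
            rw [qChoose_succ_succ, add_smul, add_comm]

end QBinomialTheorem

theorem IsPrimitiveRoot.add_pow_eq_zero {A S : Type*} [CommRing A] [IsDomain A] [Ring S]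
    [Algebra A S] {q : A} {a b : S} {N : ℕ} (hq : IsPrimitiveRoot q N)
    (h : b * a = q • (a * b)) (ha : a ^ N = 0) (hb : b ^ N = 0) : (a + b) ^ N = 0 := by
  rw [add_pow_of_mul_eq_smul_mul h]
  refine sum_eq_zero fun p hp => ?_
  rw [HasAntidiagonal.mem_antidiagonal] at hp
  rcases Nat.eq_zero_or_pos p.2 with h0 | h0
  · rw [show p.1 = N by omega, ha, zero_mul, smul_zero]
  rcases (show p.2 ≤ N by omega).lt_or_eq with hlt | hN
  · rw [hq.qChoose_eq_zero h0 hlt, zero_smul]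
  · rw [hN, hb, mul_zero, smul_zero]

section TotalEnd

variable {M : ℤ → Type*} [∀ i, AddCommGroup (M i)] [∀ i, Module R (M i)]

noncomputable def totalEnd (d : ∀ i : ℤ, M i →ₗ[R] M (i + 1)) : Module.End R (⨁ i, M i) :=
  DirectSum.toModule R ℤ _ fun i => DirectSum.lof R ℤ M (i + 1) ∘ₗ d i

variable (M) in
noncomputable def twist (ξ : Rˣ) : Module.End R (⨁ i, M i) :=
  DirectSum.toModule R ℤ _ fun i => ((ξ ^ i : Rˣ) : R) • DirectSum.lof R ℤ M i

variable (d : ∀ i : ℤ, M i →ₗ[R] M (i + 1))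

lemma lof_lcast {a b : ℤ} (h : a = b) (x : M a) :
    DirectSum.lof R ℤ M b (lcast (R := R) h x) = DirectSum.lof R ℤ M a x := by
  subst h; rfl

lemma totalEnd_lof (i : ℤ) (x : M i) :
    totalEnd d (DirectSum.lof R ℤ M i x) = DirectSum.lof R ℤ M (i + 1) (d i x) :=
  DirectSum.toModule_lof R i x

lemma twist_lof (ξ : Rˣ) (i : ℤ) (x : M i) :
    twist M ξ (DirectSum.lof R ℤ M i x) = ((ξ ^ i : Rˣ) : R) • DirectSum.lof R ℤ M i x :=
  DirectSum.toModule_lof R i x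

lemma totalEnd_pow_lof (k : ℕ) (i : ℤ) (x : M i) :
    (totalEnd d ^ k) (DirectSum.lof R ℤ M i x) = DirectSum.lof R ℤ M (i + k) (dIter M d k i x) := by
  induction k generalizing i with
  | zero => exact (lof_lcast _ x).symm
  | succ k ih =>
    rw [pow_succ, Module.End.mul_apply, totalEnd_lof, ih]
    exact (lof_lcast _ _).symm

lemma totalEnd_pow_eq_zero_iff (k : ℕ) : totalEnd d ^ k = 0 ↔ ∀ i, dIter M d k i = 0 := by
  constructor
  · intro h i
    ext x
    have hx := totalEnd_pow_lof d k i x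
    rw [h, LinearMap.zero_apply] at hx
    simpa using congr_arg (· (i + k)) hx.symm
  · intro h
    refine DirectSum.linearMap_ext _ fun i => LinearMap.ext fun x => ?_
    simp [totalEnd_pow_lof, h]

lemma twist_mul_totalEnd (ξ : Rˣ) :
    twist M ξ * totalEnd d = (ξ : R) • (totalEnd d * twist M ξ) := by
  refine DirectSum.linearMap_ext _ fun i => LinearMap.ext fun x => ?_
  simp [twist_lof, totalEnd_lof, zpow_add_one, smul_smul, mul_comm]

lemma map_twist_mul_map_totalEnd {M' : ℤ → Type*} [∀ i, AddCommGroup (M' i)]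
    [∀ i, Module R (M' i)] (d' : ∀ i : ℤ, M' i →ₗ[R] M' (i + 1)) (ξ : Rˣ) :
    TensorProduct.map (twist M ξ) (totalEnd d') * TensorProduct.map (totalEnd d) LinearMap.id =
      (ξ : R) • (TensorProduct.map (totalEnd d) LinearMap.id *
        TensorProduct.map (twist M ξ) (totalEnd d')) := by
  rw [← TensorProduct.map_mul, ← TensorProduct.map_mul, twist_mul_totalEnd,
    TensorProduct.map_smul_left]
  simp only [Module.End.mul_eq_comp, LinearMap.comp_id, LinearMap.id_comp]

end TotalEnd

section TensorProduct

variable {N : ℕ} (ξ : Rˣ) (X Y : NCx.{u, v} R N)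

noncomputable def TObj.lof {n : ℤ} (p : TIdx n) : X.M p.1.1 ⊗[R] Y.M p.1.2 →ₗ[R] TObj X Y n :=
  DirectSum.lof R (TIdx n) (fun q => X.M q.1.1 ⊗[R] Y.M q.1.2) p

noncomputable def tensorToTotal :
    (⨁ i, X.M i) ⊗[R] (⨁ j, Y.M j) →ₗ[R] ⨁ n, TObj X Y n :=
  DirectSum.toModule R (ℤ × ℤ) _ (fun p =>
      DirectSum.lof R ℤ (TObj X Y) (p.1 + p.2) ∘ₗ TObj.lof X Y (n := p.1 + p.2) ⟨p, rfl⟩) ∘ₗ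
    (TensorProduct.directSum R R X.M Y.M).toLinearMap

lemma tensorToTotal_tmul (i j : ℤ) (x : X.M i) (y : Y.M j) :
    tensorToTotal X Y (DirectSum.lof R ℤ X.M i x ⊗ₜ DirectSum.lof R ℤ Y.M j y) =
      DirectSum.lof R ℤ (TObj X Y) (i + j) (TObj.lof X Y ⟨(i, j), rfl⟩ (x ⊗ₜ y)) := by
  simp only [tensorToTotal, LinearMap.comp_apply, LinearEquiv.coe_coe,
    TensorProduct.directSum_lof_tmul_lof, DirectSum.toModule_lof]

lemma lof_tObjLof_congr {n n' : ℤ} (h : n = n') (p : ℤ × ℤ) (hp : p.1 + p.2 = n)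
    (hp' : p.1 + p.2 = n') (z : X.M p.1 ⊗[R] Y.M p.2) :
    DirectSum.lof R ℤ (TObj X Y) n (TObj.lof X Y ⟨p, hp⟩ z) =
      DirectSum.lof R ℤ (TObj X Y) n' (TObj.lof X Y ⟨p, hp'⟩ z) := by
  subst h; rfl

lemma TD_tObjLof_tmul {n : ℤ} (i j : ℤ) (h : i + j = n) (x : X.M i) (y : Y.M j) :
    TD ξ X Y n (TObj.lof X Y ⟨(i, j), h⟩ (x ⊗ₜ y)) =
      TObj.lof X Y (n := n + 1) ⟨(i + 1, j), by dsimp; omega⟩ (X.d i x ⊗ₜ y)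
        + ((ξ ^ i : Rˣ) : R) •
          TObj.lof X Y (n := n + 1) ⟨(i, j + 1), by dsimp; omega⟩ (x ⊗ₜ Y.d j y) := by
  unfold TD TObj.lof
  erw [DirectSum.toModule_lof]
  rfl

lemma tensorToTotal_comp :
    totalEnd (TD ξ X Y) ∘ₗ tensorToTotal X Y =
      tensorToTotal X Y ∘ₗ (TensorProduct.map (totalEnd X.d) LinearMap.id
        + TensorProduct.map (twist X.M ξ) (totalEnd Y.d)) := by
  refine TensorProduct.ext (DirectSum.linearMap_ext _ fun i => LinearMap.ext fun x =>
    DirectSum.linearMap_ext _ fun j => LinearMap.ext fun y => ?_)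
  simp only [LinearMap.compr₂ₛₗ_apply, TensorProduct.mk_apply, LinearMap.comp_apply,
    LinearMap.add_apply, TensorProduct.map_tmul, totalEnd_lof, twist_lof, LinearMap.id_apply,
    ← TensorProduct.smul_tmul', map_add, map_smul, tensorToTotal_tmul]
  rw [TD_tObjLof_tmul, map_add, map_smul, lof_tObjLof_congr X Y (add_right_comm i 1 j),
    lof_tObjLof_congr X Y (add_assoc i j 1).symm]

lemma totalEnd_TD_pow_comp (k : ℕ) :
    (totalEnd (TD ξ X Y) ^ k) ∘ₗ tensorToTotal X Y =
      tensorToTotal X Y ∘ₗ (TensorProduct.map (totalEnd X.d) LinearMap.id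
        + TensorProduct.map (twist X.M ξ) (totalEnd Y.d)) ^ k :=
  Module.End.commute_pow_left_of_commute (tensorToTotal_comp ξ X Y) k

lemma eq_zero_of_comp_tensorToTotal {P : Type*} [AddCommGroup P] [Module R P]
    (f : (⨁ n, TObj X Y n) →ₗ[R] P) (hf : f ∘ₗ tensorToTotal X Y = 0) : f = 0 := by
  refine DirectSum.linearMap_ext _ fun n => DirectSum.linearMap_ext _ fun ⟨⟨i, j⟩, hij⟩ =>
    TensorProduct.ext' fun x y => ?_
  subst hij
  have h := congr($hf (DirectSum.lof R ℤ X.M i x ⊗ₜ DirectSum.lof R ℤ Y.M j y))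
  rwa [LinearMap.comp_apply, tensorToTotal_tmul] at h

end TensorProduct

/-- Let `R` be an integral domain, `N` a natural number and `ξ` a primitive `N`-th root
of unity in `R`.  If `X` and `Y` are `N`-complexes of `R`-modules, then the twisted
tensor product `X ⊗_ξ Y`, with `(X ⊗_ξ Y)^n = ⊕_{i+j=n} X^i ⊗ Y^j` and differential
`d(x ⊗ y) = d_X x ⊗ y + ξ^i • (x ⊗ d_Y y)` on the summand `X^i ⊗ Y^j`, satisfies
`d^N = 0`, i.e. it is again an `N`-complex. -/
theorem tensor_isNComplex (R : Type u) [CommRing R] [IsDomain R] (N : ℕ) (ξ : Rˣ)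
    (hξ : IsPrimitiveRoot ξ N) (X Y : NCx.{u, v} R N) (n : ℤ) :
    dIter (TObj X Y) (TD ξ X Y) N n = 0 := by
  have hX : TensorProduct.map (totalEnd X.d) (LinearMap.id (M := ⨁ j, Y.M j)) ^ N = 0 := by
    rw [TensorProduct.map_pow, (totalEnd_pow_eq_zero_iff X.d N).2 X.dN,
      TensorProduct.map_zero_left]
  have hY : TensorProduct.map (twist X.M ξ) (totalEnd Y.d) ^ N = 0 := by
    rw [TensorProduct.map_pow, (totalEnd_pow_eq_zero_iff Y.d N).2 Y.dN,
      TensorProduct.map_zero_right]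
  have hXY := (IsPrimitiveRoot.coe_units_iff.2 hξ).add_pow_eq_zero
    (S := Module.End R ((⨁ i, X.M i) ⊗[R] ⨁ j, Y.M j)) (map_twist_mul_map_totalEnd X.d Y.d ξ) hX hY
  have hT : totalEnd (TD ξ X Y) ^ N = 0 := by
    refine eq_zero_of_comp_tensorToTotal X Y _ ?_
    rw [totalEnd_TD_pow_comp, hXY, LinearMap.comp_zero]
  exact (totalEnd_pow_eq_zero_iff _ N).1 hT n
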